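/- arXiv:1912.12490 — 6 statements merged into one kernel-verified Lean document; each statement's English description precedes it below -/
import Mathlib

section
/- Let (X, τ_X) be a spectral space and X_d ⊆ X. Then X_d is dense in the patch topology of X if and only if X_d is decent, i.e. for all compact open sets U, V of X, U ≠ V implies U ∩ X_d ≠ V ∩ X_d. -/
/-
The sets `U \ V` with `U, V` compact open are closed under binary intersection (because compact
opens are) and cover `X`, so they form a basis of the patch topology. Density of `Xd` therefore
means that `Xd` meets every nonempty `U \ V`. Distinct compact opens `U ≠ V` give a nonempty
`U \ V` or `V \ U`, and a point of `Xd` there separates the traces; conversely, if `U \ V` is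
nonempty then `U ≠ U ∩ V`, and decency yields a point of `Xd` in `U` but not in `V`.
-/

open Set TopologicalSpace Topology

/-- The family of compact open subsets of a topological space. -/
def CO (X : Type*) [TopologicalSpace X] : Set (Set X) := {U | IsCompact U ∧ IsOpen U}

/-- A spectral space: compact, T0, sober, the compact open sets form a basis and are
closed under binary intersections. -/
def IsSpectralTopSpace (X : Type*) [TopologicalSpace X] : Prop :=
  CompactSpace X ∧ T0Space X ∧ QuasiSober X ∧
    TopologicalSpace.IsTopologicalBasis (CO X) ∧
    ∀ U ∈ CO X, ∀ V ∈ CO X, U ∩ V ∈ CO X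

/-- The patch (constructible) topology: generated by the sets `U \ V` for `U, V`
compact open. -/
def patchTop (X : Type*) [TopologicalSpace X] : TopologicalSpace X :=
  TopologicalSpace.generateFrom {S | ∃ U ∈ CO X, ∃ V ∈ CO X, S = U \ V}

theorem isTopologicalBasis_patchTop {X : Type*} [TopologicalSpace X]
    (hcover : ⋃₀ CO X = univ) (hinter : ∀ U ∈ CO X, ∀ V ∈ CO X, U ∩ V ∈ CO X) :
    @IsTopologicalBasis X (patchTop X) {S | ∃ U ∈ CO X, ∃ V ∈ CO X, S = U \ V} := by
  have hempty : (∅ : Set X) ∈ CO X := ⟨isCompact_empty, isOpen_empty⟩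
  refine @IsTopologicalBasis.mk X (patchTop X) _ ?_ ?_ rfl
  · rintro _ ⟨U₁, hU₁, V₁, hV₁, rfl⟩ _ ⟨U₂, hU₂, V₂, hV₂, rfl⟩ x hx
    have hdiff : (U₁ \ V₁) ∩ (U₂ \ V₂) = (U₁ ∩ U₂) \ (V₁ ∪ V₂) := by
      ext y
      simp only [mem_inter_iff, mem_sdiff, mem_union]
      tauto
    exact ⟨_, ⟨_, hinter _ hU₁ _ hU₂, _, ⟨hV₁.1.union hV₂.1, hV₁.2.union hV₂.2⟩, rfl⟩,
      hdiff ▸ hx, hdiff.ge⟩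
  · refine eq_univ_of_forall fun x => ?_
    obtain ⟨U, hU, hxU⟩ := mem_sUnion.1 (hcover.symm ▸ mem_univ x)
    exact ⟨U \ ∅, ⟨U, hU, ∅, hempty, rfl⟩, by rwa [sdiff_empty]⟩

theorem forall_diff_inter_nonempty_iff {X : Type*} (𝒞 : Set (Set X))
    (hinter : ∀ U ∈ 𝒞, ∀ V ∈ 𝒞, U ∩ V ∈ 𝒞) (D : Set X) :
    (∀ U ∈ 𝒞, ∀ V ∈ 𝒞, (U \ V).Nonempty → (U \ V ∩ D).Nonempty) ↔
      ∀ U ∈ 𝒞, ∀ V ∈ 𝒞, U ≠ V → U ∩ D ≠ V ∩ D := by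
  constructor
  · intro h U hU V hV hne heq
    rcases union_nonempty.1 (symmDiff_nonempty.2 hne) with hUV | hVU
    · simpa [inter_sdiff_distrib_right, heq] using h U hU V hV hUV
    · simpa [inter_sdiff_distrib_right, heq] using h V hV U hU hVU
  · intro h U hU V hV ⟨x, hxU, hxV⟩
    by_contra hD
    refine h U hU _ (hinter U hU V hV) (fun he => hxV (he ▸ hxU).2) (Set.ext fun y => ?_)
    have hy : y ∈ U → y ∈ D → y ∈ V := fun hyU hyD =>
      not_not.1 fun hyV => hD ⟨y, ⟨hyU, hyV⟩, hyD⟩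
    simp only [mem_inter_iff]
    tauto

/-- In a spectral space, a subset `Xd` is dense in the patch topology
if and only if it is decent (distinct compact open sets have distinct traces on `Xd`). -/
theorem patchDense_iff_decent {X : Type*} [TopologicalSpace X]
    (hX : IsSpectralTopSpace X) (Xd : Set X) :
    @Dense X (patchTop X) Xd ↔
      ∀ U ∈ CO X, ∀ V ∈ CO X, U ≠ V → U ∩ Xd ≠ V ∩ Xd := by
  obtain ⟨-, -, -, hbasis, hinter⟩ := hX
  rw [@IsTopologicalBasis.dense_iff X (patchTop X) _ (isTopologicalBasis_patchTop
    hbasis.sUnion_eq hinter), ← forall_diff_inter_nonempty_iff _ hinter]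
  simp only [mem_ofPred_eq, forall_exists_index, and_imp]
  exact ⟨fun h U hU V hV => h _ U hU V hV rfl, fun h _ U hU V hV hS => hS ▸ h U hU V hV⟩
end

section
/- A topological space (X, τ_X) admits a spectralification if and only if it is T0. That is: (X, τ_X) is T0 if and only if there exist a spectral space (Y, τ_Y) and a topological embedding e : X → Y such that e(X) is dense in the patch topology of Y. -/
open Set TopologicalSpace Topology

/-!
A T0 space `X` embeds into the power `Opens X → Prop` of the Sierpiński space, which is spectral
because spectral spaces are closed under products. The patch closure `Z` of the image is again
spectral. As the patch topology of a spectral space is compact and finer than the original one,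
the traces on `Z` of compact opens are compact; hence they are exactly the compact opens of `Z`,
and the patch topology of `Z` is induced from the ambient one, in which the image is dense by
construction. `Z` is sober because the generic point of the closure of an irreducible `T ⊆ Z`
specializes to every point of `T`, which puts it in the patch closure of `T`.
-/

section Pi

variable {ι : Type*} {X : ι → Type*} [∀ i, TopologicalSpace (X i)]

instance Pi.quasiSober [∀ i, QuasiSober (X i)] : QuasiSober (∀ i, X i) where
  sober {S} hS hSc := by
    have hSi (i : ι) : IsIrreducible (Function.eval i '' S) :=
      hS.image _ (continuous_apply i).continuousOn
    let η : ∀ i, X i := fun i => (hSi i).genericPoint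
    have hη (i : ι) : IsGenericPoint (η i) (closure (Function.eval i '' S)) :=
      (hSi i).isGenericPoint_genericPoint_closure
    have hηS : η ∈ S := by
      classical
      rw [← hSc.closure_eq,
        (isTopologicalBasis_pi fun i => isTopologicalBasis_opens).mem_closure_iff]
      rintro _ ⟨U, F, hU, rfl⟩ hηU
      have hmeet : ∀ i ∈ F, (S ∩ Function.eval i ⁻¹' U i).Nonempty := fun i hi => by
        rw [← image_inter_nonempty_iff, ← closure_inter_open_nonempty_iff (hU i hi),
          ← (hη i).mem_open_set_iff (hU i hi)]
        exact hηU i hi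
      obtain ⟨y, hyS, hyU⟩ :=
        isIrreducible_iff_sInter.1 hS (F.image fun i => Function.eval i ⁻¹' U i)
        (by simpa using fun i hi => (hU i hi).preimage (continuous_apply i))
        (by simpa using hmeet)
      exact ⟨y, by simpa [Set.pi] using hyU, hyS⟩
    refine ⟨η, isGenericPoint_iff_specializes.2 fun y =>
      ⟨fun h => h.mem_closed hSc hηS, fun hy => ?_⟩⟩
    exact specializes_pi.2 fun i => (hη i).specializes (subset_closure (mem_image_of_mem _ hy))

theorem exists_univ_pi_eq_pi_of_isOpen_isCompact [∀ i, CompactSpace (X i)] {F : Set ι}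
    {U : ∀ i, Set (X i)} (hU : ∀ i ∈ F, IsOpen (U i) ∧ IsCompact (U i)) :
    ∃ W : ∀ i, Set (X i), (∀ i, IsOpen (W i) ∧ IsCompact (W i)) ∧ univ.pi W = F.pi U := by
  classical
  refine ⟨fun i => if i ∈ F then U i else univ, fun i => ?_, pi_univ_ite F U⟩
  dsimp only
  split_ifs with hi
  exacts [hU i hi, ⟨isOpen_univ, isCompact_univ⟩]

theorem isTopologicalBasis_pi_isOpen_isCompact [∀ i, PrespectralSpace (X i)] :
    IsTopologicalBasis {S : Set (∀ i, X i) | ∃ (U : ∀ i, Set (X i)) (F : Finset ι),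
      (∀ i ∈ F, IsOpen (U i) ∧ IsCompact (U i)) ∧ S = (F : Set ι).pi U} :=
  isTopologicalBasis_pi fun _ => PrespectralSpace.isTopologicalBasis

instance Pi.prespectralSpace [∀ i, CompactSpace (X i)] [∀ i, PrespectralSpace (X i)] :
    PrespectralSpace (∀ i, X i) := by
  refine .of_isTopologicalBasis isTopologicalBasis_pi_isOpen_isCompact ?_
  rintro _ ⟨U, F, hU, rfl⟩
  obtain ⟨W, hW, hWU⟩ := exists_univ_pi_eq_pi_of_isOpen_isCompact hU
  exact hWU ▸ isCompact_univ_pi fun i => (hW i).2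

instance Pi.quasiSeparatedSpace [∀ i, CompactSpace (X i)] [∀ i, PrespectralSpace (X i)]
    [∀ i, QuasiSeparatedSpace (X i)] : QuasiSeparatedSpace (∀ i, X i) := by
  refine .of_isTopologicalBasis (b := Subtype.val)
    (by rw [Subtype.range_coe]; exact isTopologicalBasis_pi_isOpen_isCompact) ?_
  rintro ⟨_, U, F, hU, rfl⟩ ⟨_, U', F', hU', rfl⟩
  obtain ⟨V, hV, hVU⟩ := exists_univ_pi_eq_pi_of_isOpen_isCompact hU
  obtain ⟨W, hW, hWU'⟩ := exists_univ_pi_eq_pi_of_isOpen_isCompact hU'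
  change IsCompact ((F : Set ι).pi U ∩ (F' : Set ι).pi U')
  rw [← hVU, ← hWU', ← pi_inter_distrib]
  exact isCompact_univ_pi fun i =>
    QuasiSeparatedSpace.inter_isCompact _ _ (hV i).1 (hV i).2 (hW i).1 (hW i).2

instance Pi.spectralSpace [∀ i, SpectralSpace (X i)] : SpectralSpace (∀ i, X i) where

end Pi

theorem SpectralSpace.of_finite {X : Type*} [TopologicalSpace X] [Finite X] [T0Space X] :
    SpectralSpace X where
  sober {S} hS hSc := by
    obtain ⟨_, hmem, hSx⟩ := isIrreducible_iff_sUnion_isClosed.1 hS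
      ((S.toFinite.image fun x => closure {x}).toFinset) (by simp)
      (fun y hy => by simpa using ⟨y, hy, subset_closure rfl⟩)
    obtain ⟨x, hx, rfl⟩ : ∃ x ∈ S, closure {x} = _ := by simpa using hmem
    exact ⟨x, subset_antisymm (closure_minimal (singleton_subset_iff.2 hx) hSc) hSx⟩

instance : SpectralSpace Prop := .of_finite

theorem SpectralSpace.isSpectralTopSpace {Y : Type*} [TopologicalSpace Y] [SpectralSpace Y] :
    IsSpectralTopSpace Y := by
  refine ⟨inferInstance, inferInstance, inferInstance, ?_, fun U hU V hV => ?_⟩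
  · simpa only [CO, and_comm] using PrespectralSpace.isTopologicalBasis (X := Y)
  · exact ⟨QuasiSeparatedSpace.inter_isCompact U V hU.2 hU.1 hV.2 hV.1, hU.2.inter hV.2⟩

theorem IsSpectralMap.preimage_mem_CO {Z Y : Type*} [TopologicalSpace Z] [TopologicalSpace Y]
    {f : Z → Y} (hf : IsSpectralMap f) {U : Set Y} (hU : U ∈ CO Y) : f ⁻¹' U ∈ CO Z :=
  ⟨hf.isCompact_preimage_of_isOpen hU.2 hU.1, hU.2.preimage hf.continuous⟩

section Patch

open Filter

variable {Y : Type*} [TopologicalSpace Y]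

theorem isOpen_patchTop_of_mem_CO {U : Set Y} (hU : U ∈ CO Y) : IsOpen[patchTop Y] U :=
  isOpen_generateFrom_of_mem ⟨U, hU, ∅, ⟨isCompact_empty, isOpen_empty⟩, sdiff_empty.symm⟩

theorem isClosed_patchTop_of_mem_CO [CompactSpace Y] {U : Set Y} (hU : U ∈ CO Y) :
    IsClosed[patchTop Y] U :=
  (@isOpen_compl_iff _ _ (patchTop Y)).1 <|
    isOpen_generateFrom_of_mem ⟨univ, ⟨isCompact_univ, isOpen_univ⟩, U, hU, compl_eq_univ_sdiff U⟩

theorem patchTop_le [PrespectralSpace Y] : patchTop Y ≤ ‹TopologicalSpace Y› := fun U hU => by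
  obtain ⟨S, hSB, rfl⟩ := PrespectralSpace.isTopologicalBasis.open_eq_sUnion hU
  exact @isOpen_sUnion _ (patchTop Y) _ fun V hV =>
    isOpen_patchTop_of_mem_CO ⟨(hSB hV).2, (hSB hV).1⟩

theorem patchTop_eq_constructibleTopology [CompactSpace Y] :
    patchTop Y = constructibleTopology Y := by
  refine le_antisymm (le_generateFrom ?_) (le_generateFrom ?_)
  · rintro s (⟨hs, hs'⟩ | ⟨hs, hs'⟩)
    · exact isOpen_patchTop_of_mem_CO ⟨hs', hs⟩
    · exact (@isClosed_compl_iff _ (patchTop Y) _).1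
        (isClosed_patchTop_of_mem_CO ⟨hs', hs.isOpen_compl⟩)
  · rintro _ ⟨U, hU, V, hV, rfl⟩
    rw [sdiff_eq]
    exact (constructibleTopology Y).isOpen_inter _ _
      (hU.1.isOpen_constructibleTopology_of_isOpen hU.2)
      (((compl_compl V).symm ▸ hV.1).isOpen_constructibleTopology_of_isClosed hV.2.isClosed_compl)

theorem compactSpace_patchTop [SpectralSpace Y] : @CompactSpace Y (patchTop Y) := by
  rw [patchTop_eq_constructibleTopology]
  exact @Function.Surjective.compactSpace _ _ _ (constructibleTopology Y) _
    (WithTopology.continuous_ofTopology _) _ (WithTopology.ofTopology_surjective _)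

theorem isCompact_of_isClosed_patchTop [SpectralSpace Y] {K : Set Y}
    (hK : IsClosed[patchTop Y] K) : IsCompact K := by
  simpa using @IsCompact.image _ _ (patchTop Y) _ _ _
    (@IsClosed.isCompact _ (patchTop Y) _ compactSpace_patchTop hK)
    (continuous_id_of_le patchTop_le)

theorem mem_closure_patchTop_of_specializes {T : Set Y} {η : Y} (hη : η ∈ closure T)
    (hT : ∀ t ∈ T, η ⤳ t) : η ∈ closure[patchTop Y] T := by
  have hnhds : 𝓝 η ⊓ 𝓟 T ≤ @nhds Y (patchTop Y) η := by
    rw [patchTop, nhds_generateFrom]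
    refine le_iInf₂ ?_
    rintro _ ⟨hηUV, U, hU, V, hV, rfl⟩
    -- a point of `T ∩ V` would put its generization `η` into the open set `V`
    have hTV : T ⊆ Vᶜ := fun t ht htV => hηUV.2 ((hT t ht).mem_open hV.2 htV)
    exact le_principal_iff.2 (mem_inf_of_inter (hU.2.mem_nhds hηUV.1) (mem_principal.2 hTV)
      subset_rfl)
  rw [mem_closure_iff_clusterPt] at hη
  rw [@mem_closure_iff_clusterPt _ (patchTop Y)]
  exact NeBot.mono hη (le_inf hnhds inf_le_right)

end Patch

section Inducing

variable {Z Y : Type*} [TopologicalSpace Z] [TopologicalSpace Y] [PrespectralSpace Y] {f : Z → Y}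

theorem Topology.IsInducing.exists_mem_CO_preimage_eq (hf : IsInducing f) {W : Set Z}
    (hW : W ∈ CO Z) : ∃ U ∈ CO Y, f ⁻¹' U = W := by
  obtain ⟨O, hO, rfl⟩ := hf.isOpen_iff.1 hW.2
  obtain ⟨U, hUc, hUo, hWU, hUO⟩ := PrespectralSpace.exists_isCompact_and_isOpen_between
    (hW.1.image hf.continuous) hO (image_preimage_subset f O)
  exact ⟨U, ⟨hUc, hUo⟩, subset_antisymm (preimage_mono hUO) (image_subset_iff.1 hWU)⟩

theorem Topology.IsInducing.quasiSeparatedSpace [QuasiSeparatedSpace Y] (hf : IsInducing f)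
    (hf' : IsSpectralMap f) : QuasiSeparatedSpace Z where
  inter_isCompact W₁ W₂ hW₁ hW₁' hW₂ hW₂' := by
    obtain ⟨U₁, hU₁, rfl⟩ := hf.exists_mem_CO_preimage_eq ⟨hW₁', hW₁⟩
    obtain ⟨U₂, hU₂, rfl⟩ := hf.exists_mem_CO_preimage_eq ⟨hW₂', hW₂⟩
    exact hf'.isCompact_preimage_of_isOpen (hU₁.2.inter hU₂.2)
      (QuasiSeparatedSpace.inter_isCompact _ _ hU₁.2 hU₁.1 hU₂.2 hU₂.1)

theorem Topology.IsInducing.patchTop_eq (hf : IsInducing f) (hf' : IsSpectralMap f) :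
    patchTop Z = (patchTop Y).induced f := by
  rw [patchTop, patchTop, induced_generateFrom_eq]
  congr 1
  ext S
  constructor
  · rintro ⟨W₁, hW₁, W₂, hW₂, rfl⟩
    obtain ⟨U₁, hU₁, rfl⟩ := hf.exists_mem_CO_preimage_eq hW₁
    obtain ⟨U₂, hU₂, rfl⟩ := hf.exists_mem_CO_preimage_eq hW₂
    exact ⟨U₁ \ U₂, ⟨U₁, hU₁, U₂, hU₂, rfl⟩, preimage_sdiff f U₁ U₂⟩
  · rintro ⟨_, ⟨U₁, hU₁, U₂, hU₂, rfl⟩, rfl⟩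
    exact ⟨f ⁻¹' U₁, hf'.preimage_mem_CO hU₁, f ⁻¹' U₂, hf'.preimage_mem_CO hU₂,
      preimage_sdiff f U₁ U₂⟩

end Inducing

section PatchClosed

variable {Y : Type*} [TopologicalSpace Y] {Z : Set Y}

theorem quasiSober_of_isClosed_patchTop [QuasiSober Y] (hZ : IsClosed[patchTop Y] Z) :
    QuasiSober Z where
  sober {S} hS hSc := by
    have hT : IsIrreducible (Subtype.val '' S : Set Y) :=
      hS.image _ continuous_subtype_val.continuousOn
    have hη := hT.isGenericPoint_genericPoint_closure
    have hηZ : hT.genericPoint ∈ Z :=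
      @closure_minimal _ (patchTop Y) _ _ (image_subset_iff.2 fun z _ => z.2) hZ _
        (mem_closure_patchTop_of_specializes hη.mem fun _ ht => hη.specializes (subset_closure ht))
    refine ⟨⟨_, hηZ⟩, ?_⟩
    rw [isGenericPoint_def, IsInducing.subtypeVal.closure_eq_preimage_closure_image,
      image_singleton, hη.def, ← IsInducing.subtypeVal.closure_eq_preimage_closure_image,
      hSc.closure_eq]

variable [SpectralSpace Y]

theorem isSpectralMap_subtypeVal_of_isClosed_patchTop (hZ : IsClosed[patchTop Y] Z) :
    IsSpectralMap (Subtype.val : Z → Y) where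
  toContinuous := continuous_subtype_val
  isCompact_preimage_of_isOpen U hU hU' := by
    rw [Subtype.isCompact_iff, image_preimage_eq_inter_range, Subtype.range_coe]
    exact isCompact_of_isClosed_patchTop
      (@IsClosed.inter _ _ _ (patchTop Y) (isClosed_patchTop_of_mem_CO ⟨hU', hU⟩) hZ)

theorem spectralSpace_of_isClosed_patchTop (hZ : IsClosed[patchTop Y] Z) : SpectralSpace Z :=
  have hval := isSpectralMap_subtypeVal_of_isClosed_patchTop hZ
  { toQuasiSober := quasiSober_of_isClosed_patchTop hZ
    toCompactSpace := isCompact_iff_compactSpace.1 (isCompact_of_isClosed_patchTop hZ)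
    toQuasiSeparatedSpace := IsInducing.subtypeVal.quasiSeparatedSpace hval
    toPrespectralSpace := .of_isInducing _ IsInducing.subtypeVal hval }

theorem dense_patchTop_preimage_val (s : Set Y) :
    @Dense (closure[patchTop Y] s) (patchTop _) (Subtype.val ⁻¹' s) := by
  have hval := isSpectralMap_subtypeVal_of_isClosed_patchTop
    (@isClosed_closure _ (patchTop Y) s)
  have hind :
      @IsInducing _ _ (patchTop _) (patchTop Y) (Subtype.val : closure[patchTop Y] s → Y) :=
    @IsInducing.mk _ _ (patchTop _) (patchTop Y) _ (IsInducing.subtypeVal.patchTop_eq hval)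
  refine (@IsInducing.dense_iff _ _ _ (patchTop Y) (patchTop _) hind _).2 fun z => ?_
  rw [image_preimage_eq_inter_range, Subtype.range_coe,
    inter_eq_left.2 (@subset_closure _ (patchTop Y) s)]
  exact z.2

end PatchClosed

/-- A topological space admits a spectralification (a topological embedding
into a spectral space with patch dense image) if and only if it is T0. -/
theorem t0_iff_spectralification {X : Type u} [TopologicalSpace X] :
    T0Space X ↔
      ∃ (Y : Type u) (tY : TopologicalSpace Y), @IsSpectralTopSpace Y tY ∧
        ∃ e : X → Y, @IsEmbedding X Y _ tY e ∧ @Dense Y (@patchTop Y tY) (Set.range e) := by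
  refine ⟨fun _ => ?_, fun ⟨Y, tY, hY, e, he, _⟩ => @IsEmbedding.t0Space _ _ _ tY hY.2.1 _ he⟩
  let e := productOfMemOpens X
  let Z := closure[patchTop (Opens X → Prop)] (range e)
  have heZ (x : X) : e x ∈ Z := @subset_closure _ (patchTop _) _ _ (mem_range_self x)
  have := spectralSpace_of_isClosed_patchTop (@isClosed_closure _ (patchTop _) (range e))
  refine ⟨Z, inferInstance, SpectralSpace.isSpectralTopSpace, codRestrict e Z heZ,
    (productOfMemOpens_isEmbedding X).codRestrict _ heZ, ?_⟩
  rw [range_codRestrict]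
  exact dense_patchTop_preimage_val _
end

section
/- Let (X, τ_X) be a strongly locally spectral space. Then CO(X) = SO(X), i.e. an open subset of X is compact if and only if it is a spectral space in the subspace topology. -/
open Set TopologicalSpace Topology

/-- The family of open subsets of `X` that are spectral spaces in the subspace
topology. -/
def SO (X : Type*) [TopologicalSpace X] : Set (Set X) :=
  {U | IsOpen U ∧ IsSpectralTopSpace ↥U}

/-- A strongly locally spectral space: locally spectral (the open spectral subspaces
cover `X`) and semispectral (the intersection of two compact open sets is compact). -/
def StronglyLocallySpectral (X : Type*) [TopologicalSpace X] : Prop :=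
  ⋃₀ SO X = Set.univ ∧ ∀ U ∈ CO X, ∀ V ∈ CO X, IsCompact (U ∩ V)

/-! Being T0, being sober and having a basis of compact opens are local properties, so a locally
spectral space has all three, and semispectrality is quasi-separatedness. An open subspace inherits
all four properties, so it is spectral exactly when it is compact. -/

section

variable {X : Type*} [TopologicalSpace X]

lemma isSpectralTopSpace_iff_spectralSpace : IsSpectralTopSpace X ↔ SpectralSpace X := by
  have hCO : CO X = {U | IsOpen U ∧ IsCompact U} := by ext; exact and_comm
  rw [IsSpectralTopSpace, hCO, ← prespectralSpace_iff]
  constructor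
  · rintro ⟨_, _, _, _, hinter⟩
    exact { inter_isCompact := fun U V hUo hUc hVo hVc ↦ (hinter U ⟨hUo, hUc⟩ V ⟨hVo, hVc⟩).2 }
  · intro _
    exact ⟨inferInstance, inferInstance, inferInstance, inferInstance,
      fun U ⟨hUo, hUc⟩ V ⟨hVo, hVc⟩ ↦ ⟨hUo.inter hVo, hUc.inter_of_isOpen hVc hUo hVo⟩⟩

lemma mem_SO_iff {U : Set X} : U ∈ SO X ↔ IsOpen U ∧ SpectralSpace U := by
  rw [SO, mem_ofPred_eq, isSpectralTopSpace_iff_spectralSpace]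

lemma SO_subset_CO : SO X ⊆ CO X := fun _ hU ↦
  have ⟨hUo, _⟩ := mem_SO_iff.1 hU
  ⟨isCompact_iff_compactSpace.2 inferInstance, hUo⟩

instance (U : SO X) : SpectralSpace (⟨U, U.2.1⟩ : Opens X) := (mem_SO_iff.1 U.2).2

lemma isOpenCover_SO (hX : ⋃₀ SO X = univ) : IsOpenCover fun U : SO X ↦ (⟨U, U.2.1⟩ : Opens X) :=
  .of_sets (fun U ↦ U.2.1) (by rwa [← sUnion_eq_iUnion])

lemma t0Space_of_sUnion_SO_eq_univ (hX : ⋃₀ SO X = univ) : T0Space X := by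
  refine T0Space.of_open_cover fun x ↦ ?_
  obtain ⟨U, hU, hxU⟩ : x ∈ ⋃₀ SO X := hX ▸ mem_univ x
  exact ⟨U, hxU, (mem_SO_iff.1 hU).1, (mem_SO_iff.1 hU).2.toT0Space⟩

lemma quasiSober_of_sUnion_SO_eq_univ (hX : ⋃₀ SO X = univ) : QuasiSober X :=
  (isOpenCover_SO hX).quasiSober

lemma prespectralSpace_of_sUnion_SO_eq_univ (hX : ⋃₀ SO X = univ) : PrespectralSpace X :=
  .of_isOpenCover (isOpenCover_SO hX)

lemma spectralSpace_of_isCompact_of_isOpen [T0Space X] [QuasiSober X] [QuasiSeparatedSpace X]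
    [PrespectralSpace X] {U : Set X} (hUc : IsCompact U) (hUo : IsOpen U) : SpectralSpace U :=
  have := isCompact_iff_compactSpace.1 hUc
  have hU := hUo.isOpenEmbedding_subtypeVal
  { hU.isEmbedding.t0Space, hU.quasiSober, hU.quasiSeparatedSpace, hU.prespectralSpace with }

end

/-- STATEMENT 9: In a strongly locally spectral space, `CO(X) = SO(X)`: an open subset
is compact iff it is spectral in the subspace topology. -/
theorem sls_CO_eq_SO {X : Type*} [TopologicalSpace X]
    (hX : StronglyLocallySpectral X) : CO X = SO X := by
  obtain ⟨hcover, hinter⟩ := hX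
  have := t0Space_of_sUnion_SO_eq_univ hcover
  have := quasiSober_of_sUnion_SO_eq_univ hcover
  have := prespectralSpace_of_sUnion_SO_eq_univ hcover
  have : QuasiSeparatedSpace X :=
    ⟨fun U V hUo hUc hVo hVc ↦ hinter U ⟨hUc, hUo⟩ V ⟨hVc, hVo⟩⟩
  refine SO_subset_CO.antisymm' fun U ⟨hUc, hUo⟩ ↦ ?_
  exact mem_SO_iff.2 ⟨hUo, spectralSpace_of_isCompact_of_isOpen hUc hUo⟩
end

section
/- Let (X, τ_X) be a strongly locally spectral space. Then CO(X)^o = ICO(X), where CO(X)^o = { M ⊆ X : M ∩ A ∈ CO(X) for every A ∈ CO(X) } and ICO(X) is the family of open subsets V of X such that V ∩ A is compact for every compact open A. -/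
/-!
An open spectral subspace is compact, hence itself a compact open set, so in a locally
spectral space the compact open sets cover `X`; openness of `M` can then be read off its
traces `M ∩ A` on compact open sets `A`.
-/

open Set TopologicalSpace Topology

/-- The family of intersection compact open subsets: open sets whose intersection with
every compact open set is compact. -/
def ICO (X : Type*) [TopologicalSpace X] : Set (Set X) :=
  {V | IsOpen V ∧ ∀ A ∈ CO X, IsCompact (V ∩ A)}

section

variable {X : Type*} [TopologicalSpace X]

theorem mem_CO_of_mem_SO {U : Set X} (hU : U ∈ SO X) : U ∈ CO X :=
  ⟨isCompact_iff_compactSpace.2 hU.2.1, hU.1⟩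

theorem sUnion_SO_subset_sUnion_CO : ⋃₀ SO X ⊆ ⋃₀ CO X :=
  sUnion_mono fun _ ↦ mem_CO_of_mem_SO

theorem isOpen_of_isOpen_inter_of_sUnion_eq_univ {S : Set (Set X)} {M : Set X}
    (hS : ⋃₀ S = univ) (hM : ∀ A ∈ S, IsOpen (M ∩ A)) : IsOpen M := by
  have hM_eq : M = ⋃ A ∈ S, M ∩ A := by
    rw [← inter_iUnion₂, ← sUnion_eq_biUnion, hS, inter_univ]
  rw [hM_eq]
  exact isOpen_biUnion hM

end

/-- STATEMENT 10: In a strongly locally spectral space,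
`CO(X)^o = { M : M ∩ A ∈ CO(X) for all A ∈ CO(X) }` equals `ICO(X)`. -/
theorem sls_COo_eq_ICO {X : Type*} [TopologicalSpace X]
    (hX : StronglyLocallySpectral X) :
    {M : Set X | ∀ A ∈ CO X, M ∩ A ∈ CO X} = ICO X := by
  have hCO_cover : ⋃₀ CO X = univ := univ_subset_iff.1 (hX.1 ▸ sUnion_SO_subset_sUnion_CO)
  ext M
  constructor
  · intro hM
    exact ⟨isOpen_of_isOpen_inter_of_sUnion_eq_univ hCO_cover fun A hA ↦ (hM A hA).2,
      fun A hA ↦ (hM A hA).1⟩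
  · rintro ⟨hM_open, hM_compact⟩ A hA
    exact ⟨hM_compact A hA, hM_open.inter hA.2⟩
end

section
/- Let (X, τ_X) be a T0 topological space in which CO(X) is a basis of the topology closed under finite intersections and the condition (∗) holds: for every closed set F and every subfamily C ⊆ CO(X) centered on F (every finite subfamily C₁, …, Cₙ of C satisfies F ∩ C₁ ∩ … ∩ Cₙ ≠ ∅), the intersection F ∩ ⋂C is nonempty. Then: (1) (CO(X), ∪, ∩, ∅) is a distributive lattice with zero; (2) the map Ψ : I ↦ ⋃I is a lattice isomorphism from the lattice of all ideals of CO(X) onto the lattice τ_X of open sets; (3) for each prime ideal p of CO(X) there is a unique point x_p ∈ X with ⋃p = X \ cl{x_p}; (4) the map p ↦ x_p is a homeomorphism from PI(CO(X)) (with the topology whose open sets are the sets D(I) = { p : I ⊄ p } for ideals I of CO(X)) onto (X, τ_X). -/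
open Set TopologicalSpace Topology

/-- An ideal of a lattice `G` of subsets (with operations `∪`, `∩` and zero `∅`):
a nonempty subfamily of `G`, downward closed within `G` and closed under `∪`. -/
def IsIdealOn {α : Type*} (G I : Set (Set α)) : Prop :=
  I ⊆ G ∧ I.Nonempty ∧ (∀ A ∈ I, ∀ B ∈ G, B ⊆ A → B ∈ I) ∧
    ∀ A ∈ I, ∀ B ∈ I, A ∪ B ∈ I

/-- A prime ideal of the lattice `G` of sets: a proper ideal `p` with
`A ∩ B ∈ p` implying `A ∈ p` or `B ∈ p`. -/
def IsPrimeIdealOn {α : Type*} (G p : Set (Set α)) : Prop :=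
  IsIdealOn G p ∧ p ≠ G ∧ ∀ A ∈ G, ∀ B ∈ G, A ∩ B ∈ p → A ∈ p ∨ B ∈ p

/-- The prime ideals of the lattice `G` of sets. -/
def PrimeIdealsOn {α : Type*} (G : Set (Set α)) : Type _ :=
  {p : Set (Set α) // IsPrimeIdealOn G p}

/-- The Stone topology on the prime ideals of `G`, whose open sets are the sets
`D(I) = { p : I ⊄ p }` for ideals `I` of `G`. -/
def stoneTopOn {α : Type*} (G : Set (Set α)) : TopologicalSpace (PrimeIdealsOn G) :=
  TopologicalSpace.generateFrom
    {S | ∃ I : Set (Set α), IsIdealOn G I ∧ S = {p : PrimeIdealsOn G | ¬ I ⊆ p.1}}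

/-!
A prime ideal `p` of `CO(X)` determines the closed set `F = X \ ⋃ p`, and the compact opens
outside `p` form a family centered on `F`: by primality and closure under `∩`, any finitely many
of them contain a common one `W ∉ p`, and `W` meets `F` because a compact open covered by `⋃ p`
already lies in `p`. Condition (∗) then yields a point `x ∈ F` lying in every compact open outside
`p`, i.e. `p` is the ideal of compact opens missing `x`. Since `CO(X)` is a basis, this ideal has
union `X \ cl{x}`, and T0 makes `x` unique. The same basis property turns `⋃ p` into an order
embedding on ideals and identifies `D(I)` with `⋃ I` under `x ↦ {U ∈ CO(X) | x ∉ U}`.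
-/

namespace IsIdealOn

variable {α : Type*} {G I : Set (Set α)}

lemma empty_mem (hI : IsIdealOn G I) (hG : ∅ ∈ G) : ∅ ∈ I := by
  obtain ⟨A, hA⟩ := hI.2.1
  exact hI.2.2.1 A hA ∅ hG (empty_subset A)

lemma sUnion_mem (hI : IsIdealOn G I) (hG : ∅ ∈ G) {S : Set (Set α)} (hS : S.Finite)
    (hSI : S ⊆ I) : ⋃₀ S ∈ I := by
  induction S, hS using Set.Finite.induction_on with
  | empty => simpa using hI.empty_mem hG
  | @insert A S _ _ ih =>
    rw [sUnion_insert]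
    exact hI.2.2.2 A (hSI (mem_insert A S)) _ (ih ((subset_insert A S).trans hSI))

end IsIdealOn

lemma IsPrimeIdealOn.exists_subset_sInter {α : Type*} {G p : Set (Set α)}
    (hp : IsPrimeIdealOn G p) (hG : ∀ A ∈ G, ∀ B ∈ G, A ∩ B ∈ G)
    (S : Finset (Set α)) (hS : ↑S ⊆ G \ p) : ∃ W ∈ G \ p, W ⊆ ⋂₀ ↑S := by
  classical
  induction S using Finset.induction_on with
  | empty =>
    obtain ⟨W, hWG, hWp⟩ := not_subset.1 fun h => hp.2.1 (hp.1.1.antisymm h)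
    exact ⟨W, ⟨hWG, hWp⟩, by simp⟩
  | @insert A S _ ih =>
    rw [Finset.coe_insert, insert_subset_iff] at hS
    obtain ⟨⟨hAG, hAp⟩, hS⟩ := hS
    obtain ⟨W, ⟨hWG, hWp⟩, hWS⟩ := ih hS
    refine ⟨A ∩ W, ⟨hG A hAG W hWG, fun h => ?_⟩, ?_⟩
    · exact (hp.2.2 A hAG W hWG h).elim hAp hWp
    · rw [Finset.coe_insert, sInter_insert]
      exact inter_subset_inter_right A hWS

section CompactOpens

variable {X : Type*} [TopologicalSpace X]

lemma empty_mem_CO : (∅ : Set X) ∈ CO X := ⟨isCompact_empty, isOpen_empty⟩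

lemma union_mem_CO {U V : Set X} (hU : U ∈ CO X) (hV : V ∈ CO X) : U ∪ V ∈ CO X :=
  ⟨hU.1.union hV.1, hU.2.union hV.2⟩

variable (X) in
def StarCondition : Prop :=
  ∀ F : Set X, IsClosed F → ∀ C ⊆ CO X,
    (∀ 𝒮 : Finset (Set X), ↑𝒮 ⊆ C → (F ∩ ⋂₀ (𝒮 : Set (Set X))).Nonempty) → (F ∩ ⋂₀ C).Nonempty

def idealBelow (V : Set X) : Set (Set X) := {U | U ∈ CO X ∧ U ⊆ V}

def pointIdeal (x : X) : Set (Set X) := {U | U ∈ CO X ∧ x ∉ U}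

namespace IsIdealOn

variable {I J : Set (Set X)}

lemma isOpen_sUnion (hI : IsIdealOn (CO X) I) : IsOpen (⋃₀ I) :=
  _root_.isOpen_sUnion fun _ hU => (hI.1 hU).2

lemma mem_of_subset_sUnion (hI : IsIdealOn (CO X) I) {U : Set X} (hU : U ∈ CO X)
    (hUI : U ⊆ ⋃₀ I) : U ∈ I := by
  rw [sUnion_eq_biUnion] at hUI
  obtain ⟨S, hSI, hS, hUS⟩ := hU.1.elim_finite_subcover_image (fun A hA => (hI.1 hA).2) hUI
  exact hI.2.2.1 _ (hI.sUnion_mem empty_mem_CO hS hSI) U hU (by rwa [sUnion_eq_biUnion])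

lemma subset_iff_sUnion_subset (hI : IsIdealOn (CO X) I) (hJ : IsIdealOn (CO X) J) :
    I ⊆ J ↔ ⋃₀ I ⊆ ⋃₀ J :=
  ⟨sUnion_mono, fun h _ hU => hJ.mem_of_subset_sUnion (hI.1 hU) ((subset_sUnion_of_mem hU).trans h)⟩

end IsIdealOn

lemma injOn_sUnion_ideals : InjOn sUnion {I : Set (Set X) | IsIdealOn (CO X) I} :=
  fun _ hI _ hJ h => ((hI.subset_iff_sUnion_subset hJ).2 h.le).antisymm
    ((hJ.subset_iff_sUnion_subset hI).2 h.ge)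

lemma isIdealOn_idealBelow (V : Set X) : IsIdealOn (CO X) (idealBelow V) :=
  ⟨fun _ hU => hU.1, ⟨∅, empty_mem_CO, empty_subset V⟩,
    fun _ hA _ hB hBA => ⟨hB, hBA.trans hA.2⟩,
    fun _ hA _ hB => ⟨union_mem_CO hA.1 hB.1, union_subset hA.2 hB.2⟩⟩

lemma sUnion_idealBelow (h_basis : IsTopologicalBasis (CO X)) {V : Set X} (hV : IsOpen V) :
    ⋃₀ idealBelow V = V :=
  (h_basis.open_eq_sUnion' hV).symm

lemma pointIdeal_eq_idealBelow (x : X) : pointIdeal x = idealBelow (closure {x})ᶜ := by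
  ext U
  refine and_congr_right fun hU => ?_
  rw [subset_compl_iff_disjoint_right, ← disjoint_singleton_right]
  exact ⟨fun h => h.closure_right hU.2, fun h => h.mono_right subset_closure⟩

lemma sUnion_pointIdeal (h_basis : IsTopologicalBasis (CO X)) (x : X) :
    ⋃₀ pointIdeal x = (closure {x})ᶜ := by
  rw [pointIdeal_eq_idealBelow, sUnion_idealBelow h_basis isClosed_closure.isOpen_compl]

lemma isPrimeIdealOn_pointIdeal (h_basis : IsTopologicalBasis (CO X)) (x : X) :
    IsPrimeIdealOn (CO X) (pointIdeal x) := by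
  refine ⟨pointIdeal_eq_idealBelow x ▸ isIdealOn_idealBelow _, fun h => ?_,
    fun A hA B hB hAB => ?_⟩
  · obtain ⟨W, hW, hxW, -⟩ := h_basis.exists_subset_of_mem_open (mem_univ x) isOpen_univ
    exact (h ▸ hW : W ∈ pointIdeal x).2 hxW
  · by_cases hxA : x ∈ A
    · exact Or.inr ⟨hB, fun hxB => hAB.2 ⟨hxA, hxB⟩⟩
    · exact Or.inl ⟨hA, hxA⟩

lemma pointIdeal_injective [T0Space X] (h_basis : IsTopologicalBasis (CO X)) :
    Function.Injective (pointIdeal (X := X)) := by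
  intro x y h
  have hcl := congrArg sUnion h
  rw [sUnion_pointIdeal h_basis, sUnion_pointIdeal h_basis, compl_inj_iff] at hcl
  exact (inseparable_iff_closure_eq.2 hcl).eq

lemma sUnion_eq_compl_closure_iff (h_basis : IsTopologicalBasis (CO X))
    {p : Set (Set X)} (hp : IsIdealOn (CO X) p) {x : X} :
    ⋃₀ p = (closure {x})ᶜ ↔ p = pointIdeal x := by
  rw [← sUnion_pointIdeal h_basis]
  exact injOn_sUnion_ideals.eq_iff hp ((isPrimeIdealOn_pointIdeal h_basis x).1)

lemma exists_eq_pointIdeal (h_inter : ∀ U ∈ CO X, ∀ V ∈ CO X, U ∩ V ∈ CO X)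
    (h_star : StarCondition X) {p : Set (Set X)} (hp : IsPrimeIdealOn (CO X) p) :
    ∃ x, p = pointIdeal x := by
  have centered : ∀ 𝒮 : Finset (Set X), ↑𝒮 ⊆ CO X \ p → ((⋃₀ p)ᶜ ∩ ⋂₀ ↑𝒮).Nonempty := by
    intro 𝒮 h𝒮
    obtain ⟨W, ⟨hW, hWp⟩, hW𝒮⟩ := hp.exists_subset_sInter h_inter 𝒮 h𝒮
    obtain ⟨y, hyW, hyp⟩ := not_subset.1 fun h => hWp (hp.1.mem_of_subset_sUnion hW h)
    exact ⟨y, hyp, hW𝒮 hyW⟩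
  obtain ⟨x, hxp, hxC⟩ := h_star _ hp.1.isOpen_sUnion.isClosed_compl _ sdiff_subset centered
  refine ⟨x, ext fun U => ⟨fun hU => ⟨hp.1.1 hU, fun hxU => hxp ⟨U, hU, hxU⟩⟩, ?_⟩⟩
  rintro ⟨hU, hxU⟩
  by_contra hUp
  exact hxU (hxC U ⟨hU, hUp⟩)

section StoneTopology

attribute [local instance] stoneTopOn

lemma setOf_not_subset_pointIdeal {I : Set (Set X)} (hI : I ⊆ CO X) :
    {x : X | ¬ I ⊆ pointIdeal x} = ⋃₀ I := by
  ext x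
  simp only [mem_ofPred_eq, not_subset, pointIdeal, mem_sUnion, not_and, not_not]
  exact exists_congr fun U => and_congr_right fun hU => ⟨fun h => h (hI hU), fun h _ => h⟩

lemma exists_homeomorph_pointIdeal [T0Space X] (h_basis : IsTopologicalBasis (CO X))
    (h_inter : ∀ U ∈ CO X, ∀ V ∈ CO X, U ∩ V ∈ CO X)
    (h_star : StarCondition X) :
    ∃ e : X ≃ₜ PrimeIdealsOn (CO X), ∀ x, (e x).1 = pointIdeal x := by
  let φ : X → PrimeIdealsOn (CO X) := fun x => ⟨pointIdeal x, isPrimeIdealOn_pointIdeal h_basis x⟩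
  have hφ : Function.Bijective φ :=
    ⟨fun x y h => pointIdeal_injective h_basis (congrArg Subtype.val h),
      fun p => (exists_eq_pointIdeal h_inter h_star p.2).imp fun _ hx => Subtype.ext hx.symm⟩
  have preimage_D {I : Set (Set X)} (hI : IsIdealOn (CO X) I) :
      φ ⁻¹' {p | ¬ I ⊆ p.1} = ⋃₀ I :=
    setOf_not_subset_pointIdeal hI.1
  have hcont : Continuous φ := continuous_generateFrom_iff.2 <| by
    rintro _ ⟨I, hI, rfl⟩
    rw [preimage_D hI]
    exact hI.isOpen_sUnion
  have hopen : IsOpenMap φ := fun V hV => by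
    have hD := preimage_D (isIdealOn_idealBelow V)
    rw [sUnion_idealBelow h_basis hV] at hD
    rw [← hD, image_preimage_eq _ hφ.2]
    exact isOpen_generateFrom_of_mem ⟨_, isIdealOn_idealBelow V, rfl⟩
  exact ⟨(Equiv.ofBijective φ hφ).toHomeomorphOfContinuousOpen hcont hopen, fun _ => rfl⟩

end StoneTopology

end CompactOpens

/-- Stone: Let `X` be a T0 space in which `CO(X)` is a basis closed under
finite intersections and condition (∗) holds. Then (1) `CO(X)` is a distributive lattice
with zero (contains `∅`, closed under `∪` and `∩`); (2) `I ↦ ⋃ I` is a lattice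
isomorphism from the ideals of `CO(X)` onto the open sets; (3) each prime ideal `p` of
`CO(X)` has a unique point `x_p` with `⋃ p = X \ cl{x_p}`; (4) `p ↦ x_p` is a
homeomorphism from `PI(CO(X))` onto `X`. -/
theorem stone_representation {X : Type*} [TopologicalSpace X] [T0Space X]
    (h_basis : TopologicalSpace.IsTopologicalBasis (CO X))
    (h_inter : ∀ U ∈ CO X, ∀ V ∈ CO X, U ∩ V ∈ CO X)
    (h_star : ∀ F : Set X, IsClosed F → ∀ C ⊆ CO X,
      (∀ 𝒮 : Finset (Set X), ↑𝒮 ⊆ C → (F ∩ ⋂₀ (𝒮 : Set (Set X))).Nonempty) →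
      (F ∩ ⋂₀ C).Nonempty) :
    (∅ ∈ CO X ∧ (∀ U ∈ CO X, ∀ V ∈ CO X, U ∪ V ∈ CO X) ∧
      (∀ U ∈ CO X, ∀ V ∈ CO X, U ∩ V ∈ CO X)) ∧
    (Set.BijOn (fun I : Set (Set X) => ⋃₀ I) {I : Set (Set X) | IsIdealOn (CO X) I} {U | IsOpen U} ∧
      ∀ I J : Set (Set X), IsIdealOn (CO X) I → IsIdealOn (CO X) J →
        (I ⊆ J ↔ ⋃₀ I ⊆ ⋃₀ J)) ∧
    (∀ p : Set (Set X), IsPrimeIdealOn (CO X) p →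
      ∃! x : X, ⋃₀ p = (closure {x})ᶜ) ∧
    (∃ h : @Homeomorph (PrimeIdealsOn (CO X)) X (stoneTopOn (CO X)) _,
      ∀ p : PrimeIdealsOn (CO X), ⋃₀ p.1 = (closure {h p})ᶜ) := by
  let _ := stoneTopOn (CO X)
  obtain ⟨e, he⟩ := exists_homeomorph_pointIdeal h_basis h_inter h_star
  refine ⟨⟨empty_mem_CO, fun U hU V hV => union_mem_CO hU hV, h_inter⟩,
    ⟨⟨fun I hI => hI.isOpen_sUnion, injOn_sUnion_ideals, fun V hV => ?_⟩,
      fun I J hI hJ => hI.subset_iff_sUnion_subset hJ⟩, fun p hp => ?_, e.symm, fun p => ?_⟩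
  · exact ⟨idealBelow V, isIdealOn_idealBelow V, sUnion_idealBelow h_basis hV⟩
  · simp only [sUnion_eq_compl_closure_iff h_basis hp.1]
    obtain ⟨x, rfl⟩ := exists_eq_pointIdeal h_inter h_star hp
    exact ⟨x, rfl, fun y hy => pointIdeal_injective h_basis hy.symm⟩
  · rw [sUnion_eq_compl_closure_iff h_basis p.2.1, ← he, e.apply_symm_apply]
end

section
/- Let (L, ∨, ∧, 0) be a distributive lattice with zero. Then the space PF(L) of prime filters of L with the topology generated by { D^f(a) : a ∈ L }, where D^f(a) = { q ∈ PF(L) : a ∈ q }, is a strongly locally spectral topological space; likewise the space PI(L) of prime ideals with the topology generated by { D(a) : a ∈ L }, where D(a) = { p ∈ PI(L) : a ∉ p }, is strongly locally spectral. -/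
open Set TopologicalSpace Topology

/-- An ideal of a distributive lattice with zero. -/
def IsIdealZ {L : Type*} [DistribLattice L] [OrderBot L] (I : Set L) : Prop :=
  I.Nonempty ∧ (∀ a ∈ I, ∀ b, b ≤ a → b ∈ I) ∧ ∀ a ∈ I, ∀ b ∈ I, a ⊔ b ∈ I

/-- A prime ideal of a distributive lattice with zero. -/
def IsPrimeIdealZ {L : Type*} [DistribLattice L] [OrderBot L] (p : Set L) : Prop :=
  IsIdealZ p ∧ p ≠ Set.univ ∧ ∀ a b : L, a ⊓ b ∈ p → a ∈ p ∨ b ∈ p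

/-- A prime filter of a distributive lattice with zero: nonempty, upward closed,
closed under `⊓`, proper (not containing `⊥`), prime. -/
def IsPrimeFilterZ {L : Type*} [DistribLattice L] [OrderBot L] (q : Set L) : Prop :=
  q.Nonempty ∧ (∀ a ∈ q, ∀ b, a ≤ b → b ∈ q) ∧ (∀ a ∈ q, ∀ b ∈ q, a ⊓ b ∈ q) ∧
    (⊥ : L) ∉ q ∧ ∀ a b : L, a ⊔ b ∈ q → a ∈ q ∨ b ∈ q

/-- The prime filters of `L`. -/
def PrimeFilters (L : Type*) [DistribLattice L] [OrderBot L] : Type _ :=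
  {q : Set L // IsPrimeFilterZ q}

/-- The prime ideals of `L`. -/
def PrimeIdeals (L : Type*) [DistribLattice L] [OrderBot L] : Type _ :=
  {p : Set L // IsPrimeIdealZ p}

/-- `D^f(a) = { q ∈ PF(L) : a ∈ q }`. -/
def Dfa {L : Type*} [DistribLattice L] [OrderBot L] (a : L) : Set (PrimeFilters L) :=
  {q | a ∈ q.1}

/-- `D(a) = { p ∈ PI(L) : a ∉ p }`. -/
def Da {L : Type*} [DistribLattice L] [OrderBot L] (a : L) : Set (PrimeIdeals L) :=
  {p | a ∉ p.1}

/-! Complementation is a homeomorphism `PF(L) ≃ PI(L)` taking `D^f(a)` to `D(a)`, so it suffices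
to treat `PI(L)`. There the sets `D(a)` form a basis with `D(a) ∩ D(b) = D(a ⊓ b)`, and
`p ↦ p ∩ [⊥, a]` identifies `D(a)` with the prime spectrum of the bounded distributive lattice
`[⊥, a]`, read as a commutative semiring with `⊔` as addition and `⊓` as multiplication. Hence
every `D(a)` is spectral, in particular compact, and `PI(L)` is quasi-separated. -/

section SpectralSpace

variable {X Y : Type*} [TopologicalSpace X] [TopologicalSpace Y]

theorem Homeomorph.spectralSpace (e : X ≃ₜ Y) [SpectralSpace X] : SpectralSpace Y :=
  have : CompactSpace Y := e.compactSpace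
  e.symm.isOpenEmbedding.spectralSpace

theorem isSpectralTopSpace_of_spectralSpace [SpectralSpace X] : IsSpectralTopSpace X := by
  have hCO : CO X = {U | IsOpen U ∧ IsCompact U} := by ext U; exact and_comm
  refine ⟨inferInstance, inferInstance, inferInstance, hCO ▸ PrespectralSpace.isTopologicalBasis,
    fun U hU V hV => ⟨?_, hU.2.inter hV.2⟩⟩
  exact QuasiSeparatedSpace.inter_isCompact U V hU.2 hU.1 hV.2 hV.1

theorem stronglyLocallySpectral_of_spectralSpace_cover [QuasiSeparatedSpace X] {ι : Type*}
    (U : ι → Set X) (hU : ∀ i, IsOpen (U i)) (hcover : ∀ x, ∃ i, x ∈ U i)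
    [∀ i, SpectralSpace (U i)] : StronglyLocallySpectral X := by
  refine ⟨eq_univ_of_forall fun x => ?_, fun V hV W hW => ?_⟩
  · obtain ⟨i, hx⟩ := hcover x
    exact ⟨U i, ⟨hU i, isSpectralTopSpace_of_spectralSpace⟩, hx⟩
  · exact QuasiSeparatedSpace.inter_isCompact V W hV.2 hV.1 hW.2 hW.1

end SpectralSpace

section Lattice

variable {L : Type*} [DistribLattice L]

/-- The interval `[⊥, a]` as a commutative semiring, with `⊔` as addition and `⊓` as
multiplication. -/
def IicSemiring (a : L) : Type _ := {x : L // x ≤ a}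

namespace IicSemiring

variable {a : L}

instance [OrderBot L] : Zero (IicSemiring a) := ⟨⟨⊥, bot_le⟩⟩
instance : One (IicSemiring a) := ⟨⟨a, le_rfl⟩⟩
instance : Add (IicSemiring a) := ⟨fun x y => ⟨x.1 ⊔ y.1, sup_le x.2 y.2⟩⟩
instance : Mul (IicSemiring a) := ⟨fun x y => ⟨x.1 ⊓ y.1, inf_le_of_left_le x.2⟩⟩

instance [OrderBot L] : CommSemiring (IicSemiring a) where
  add_assoc x y z := Subtype.ext (sup_assoc x.1 y.1 z.1)
  zero_add x := Subtype.ext (bot_sup_eq x.1)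
  add_zero x := Subtype.ext (sup_bot_eq x.1)
  add_comm x y := Subtype.ext (sup_comm x.1 y.1)
  mul_assoc x y z := Subtype.ext (inf_assoc x.1 y.1 z.1)
  one_mul x := Subtype.ext (inf_eq_right.2 x.2)
  mul_one x := Subtype.ext (inf_eq_left.2 x.2)
  left_distrib x y z := Subtype.ext (inf_sup_left x.1 y.1 z.1)
  right_distrib x y z := Subtype.ext (inf_sup_right x.1 y.1 z.1)
  zero_mul x := Subtype.ext (bot_inf_eq x.1)
  mul_zero x := Subtype.ext (inf_bot_eq x.1)
  mul_comm x y := Subtype.ext (inf_comm x.1 y.1)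
  nsmul := nsmulRec

def cut (a x : L) : IicSemiring a := ⟨x ⊓ a, inf_le_right⟩

theorem cut_sup (x y : L) : cut a (x ⊔ y) = cut a x + cut a y :=
  Subtype.ext (inf_sup_right x y a)

theorem cut_inf (x y : L) : cut a (x ⊓ y) = cut a x * cut a y :=
  Subtype.ext (inf_inf_distrib_right x y a)

theorem cut_bot [OrderBot L] : cut a ⊥ = 0 :=
  Subtype.ext (bot_inf_eq a)

theorem cut_self : cut a a = 1 :=
  Subtype.ext (inf_idem a)

theorem cut_eq_mul_of_le {x y : L} (h : y ≤ x) : cut a y = cut a y * cut a x := by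
  rw [← cut_inf, inf_eq_left.2 h]

end IicSemiring

variable [OrderBot L]

instance : TopologicalSpace (PrimeIdeals L) :=
  generateFrom {S | ∃ a : L, S = Da a}

instance : TopologicalSpace (PrimeFilters L) :=
  generateFrom {S | ∃ a : L, S = Dfa a}

namespace PrimeIdeals

variable (p : PrimeIdeals L) {x y : L}

theorem mem_of_le (hx : x ∈ p.1) (h : y ≤ x) : y ∈ p.1 :=
  p.2.1.2.1 x hx y h

theorem bot_mem : (⊥ : L) ∈ p.1 :=
  let ⟨_, hx⟩ := p.2.1.1
  p.mem_of_le hx bot_le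

theorem sup_mem (hx : x ∈ p.1) (hy : y ∈ p.1) : x ⊔ y ∈ p.1 :=
  p.2.1.2.2 x hx y hy

theorem inf_mem_iff : x ⊓ y ∈ p.1 ↔ x ∈ p.1 ∨ y ∈ p.1 :=
  ⟨p.2.2.2 x y, fun h => h.elim (p.mem_of_le · inf_le_left) (p.mem_of_le · inf_le_right)⟩

theorem exists_not_mem : ∃ a : L, a ∉ p.1 := by
  by_contra! h
  exact p.2.2.1 (eq_univ_of_forall h)

end PrimeIdeals

theorem Da_inf (a b : L) : Da a ∩ Da b = Da (a ⊓ b) := by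
  ext p
  simp only [Da, mem_inter_iff, mem_ofPred_eq, p.inf_mem_iff, not_or]

theorem isOpen_Da (a : L) : IsOpen (Da a) :=
  isOpen_generateFrom_of_mem ⟨a, rfl⟩

theorem isTopologicalBasis_range_Da : IsTopologicalBasis (range (Da (L := L))) where
  exists_subset_inter := by
    rintro _ ⟨a, rfl⟩ _ ⟨b, rfl⟩ p hp
    exact ⟨Da (a ⊓ b), ⟨a ⊓ b, rfl⟩, Da_inf a b ▸ hp, (Da_inf a b).superset⟩
  sUnion_eq := sUnion_eq_univ_iff.2 fun p =>
    let ⟨a, ha⟩ := p.exists_not_mem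
    ⟨Da a, ⟨a, rfl⟩, ha⟩
  eq_generateFrom := congrArg generateFrom (ext fun _ => exists_congr fun _ => eq_comm)

open IicSemiring

def Da.toSpectrum {a : L} (p : Da a) : PrimeSpectrum (IicSemiring a) where
  asIdeal :=
    { carrier := {x | x.1 ∈ p.1.1}
      add_mem' := p.1.sup_mem
      zero_mem' := p.1.bot_mem
      smul_mem' := fun _ _ hx => p.1.mem_of_le hx inf_le_right }
  isPrime :=
    { ne_top' := (Ideal.ne_top_iff_one _).2 p.2
      mem_or_mem' := fun {x y} => p.1.2.2.2 x.1 y.1 }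

theorem cut_self_notMem {a : L} (I : PrimeSpectrum (IicSemiring a)) : cut a a ∉ I.asIdeal :=
  cut_self (a := a) ▸ I.isPrime.one_notMem

theorem isPrimeIdealZ_preimage_cut {a : L} (I : PrimeSpectrum (IicSemiring a)) :
    IsPrimeIdealZ (cut a ⁻¹' I.asIdeal) := by
  refine ⟨⟨⟨⊥, ?_⟩, ?_, ?_⟩, ?_, ?_⟩
  · change cut a ⊥ ∈ I.asIdeal
    rw [cut_bot]
    exact I.asIdeal.zero_mem
  · intro x hx y hy
    change cut a y ∈ I.asIdeal
    rw [cut_eq_mul_of_le hy]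
    exact I.asIdeal.mul_mem_left _ hx
  · intro x hx y hy
    change cut a (x ⊔ y) ∈ I.asIdeal
    rw [cut_sup]
    exact I.asIdeal.add_mem hx hy
  · exact fun h => cut_self_notMem I (eq_univ_iff_forall.1 h a)
  · intro x y hxy
    change cut a (x ⊓ y) ∈ I.asIdeal at hxy
    rw [cut_inf] at hxy
    exact I.isPrime.mem_or_mem hxy

def Da.ofSpectrum {a : L} (I : PrimeSpectrum (IicSemiring a)) : Da a :=
  ⟨⟨cut a ⁻¹' I.asIdeal, isPrimeIdealZ_preimage_cut I⟩, cut_self_notMem I⟩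

def Da.homeomorphSpectrum (a : L) : Da a ≃ₜ PrimeSpectrum (IicSemiring a) where
  toFun := Da.toSpectrum
  invFun := Da.ofSpectrum
  left_inv p := by
    refine Subtype.ext (Subtype.ext (ext fun x => ?_))
    change x ⊓ a ∈ p.1.1 ↔ x ∈ p.1.1
    rw [p.1.inf_mem_iff]
    exact or_iff_left p.2
  right_inv I := by
    ext x
    change cut a x.1 ∈ I.asIdeal ↔ x ∈ I.asIdeal
    rw [show cut a x.1 = x from Subtype.ext (inf_eq_left.2 x.2)]
  continuous_toFun := by
    refine PrimeSpectrum.isTopologicalBasis_basic_opens.continuous_iff.2 ?_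
    rintro _ ⟨x, rfl⟩
    exact (isOpen_Da x.1).preimage continuous_subtype_val
  continuous_invFun := by
    refine continuous_induced_rng.2 (continuous_generateFrom_iff.2 ?_)
    rintro _ ⟨b, rfl⟩
    exact PrimeSpectrum.isOpen_basicOpen (a := cut a b)

instance (a : L) : SpectralSpace (Da a) :=
  (Da.homeomorphSpectrum a).symm.spectralSpace

theorem isCompact_Da (a : L) : IsCompact (Da a) :=
  isCompact_iff_compactSpace.2 inferInstance

instance : QuasiSeparatedSpace (PrimeIdeals L) :=
  .of_isTopologicalBasis isTopologicalBasis_range_Da fun a b => Da_inf a b ▸ isCompact_Da _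

theorem isPrimeIdealZ_compl {q : Set L} (hq : IsPrimeFilterZ q) : IsPrimeIdealZ qᶜ := by
  obtain ⟨⟨x, hx⟩, hup, hinf, hbot, hprime⟩ := hq
  exact ⟨⟨⟨⊥, hbot⟩, fun u hu v hvu hv => hu (hup v hv u hvu),
    fun u hu v hv huv => (hprime u v huv).elim hu hv⟩, fun h => eq_univ_iff_forall.1 h x hx,
    fun u v huv => or_iff_not_and_not.2 fun ⟨hu, hv⟩ =>
      huv (hinf u (of_not_not hu) v (of_not_not hv))⟩

theorem isPrimeFilterZ_compl {p : Set L} (hp : IsPrimeIdealZ p) : IsPrimeFilterZ pᶜ := by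
  obtain ⟨⟨⟨x, hx⟩, hdown, hsup⟩, hproper, hprime⟩ := hp
  exact ⟨nonempty_compl.2 hproper, fun u hu v huv hv => hu (hdown v hv u huv),
    fun u hu v hv huv => (hprime u v huv).elim hu hv, fun h => h (hdown x hx ⊥ bot_le),
    fun u v huv => or_iff_not_and_not.2 fun ⟨hu, hv⟩ =>
      huv (hsup u (of_not_not hu) v (of_not_not hv))⟩

def PrimeFilters.complHomeomorph : PrimeFilters L ≃ₜ PrimeIdeals L where
  toFun q := ⟨q.1ᶜ, isPrimeIdealZ_compl q.2⟩
  invFun p := ⟨p.1ᶜ, isPrimeFilterZ_compl p.2⟩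
  left_inv q := Subtype.ext (compl_compl q.1)
  right_inv p := Subtype.ext (compl_compl p.1)
  continuous_toFun := by
    refine continuous_generateFrom_iff.2 ?_
    rintro _ ⟨a, rfl⟩
    exact isOpen_generateFrom_of_mem ⟨a, by ext q; exact not_not⟩
  continuous_invFun := by
    refine continuous_generateFrom_iff.2 ?_
    rintro _ ⟨a, rfl⟩
    exact isOpen_generateFrom_of_mem ⟨a, rfl⟩

theorem isOpen_Dfa (a : L) : IsOpen (Dfa a) :=
  isOpen_generateFrom_of_mem ⟨a, rfl⟩

instance (a : L) : SpectralSpace (Dfa a) :=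
  ((PrimeFilters.complHomeomorph.subtype fun _ => not_not.symm).trans
    (Da.homeomorphSpectrum a)).symm.spectralSpace

instance : QuasiSeparatedSpace (PrimeFilters L) :=
  PrimeFilters.complHomeomorph.isOpenEmbedding.quasiSeparatedSpace

end Lattice

/-- STATEMENT 16: For a distributive lattice `L` with zero, the prime filter space
`PF(L)` with the topology generated by the sets `D^f(a)`, and the prime ideal space
`PI(L)` with the topology generated by the sets `D(a)`, are strongly locally spectral. -/
theorem primeFilters_primeIdeals_sls {L : Type*} [DistribLattice L] [OrderBot L] :
    @StronglyLocallySpectral (PrimeFilters L)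
        (TopologicalSpace.generateFrom {S | ∃ a : L, S = Dfa a}) ∧
      @StronglyLocallySpectral (PrimeIdeals L)
        (TopologicalSpace.generateFrom {S | ∃ a : L, S = Da a}) :=
  ⟨stronglyLocallySpectral_of_spectralSpace_cover Dfa isOpen_Dfa fun q => q.2.1,
    stronglyLocallySpectral_of_spectralSpace_cover Da isOpen_Da PrimeIdeals.exists_not_mem⟩
end
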